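/- Corrected pseudo-inverse property: let m*₁,…,m*ₙ > 0, J*₁,…,J*ₙ symmetric positive semidefinite 3×3 matrices, m*_o = ∑ᵢ m*ᵢ, J*_o = ∑ᵢ J*ᵢ + ∑ᵢ S(rᵢ) m*ᵢ S(rᵢ)ᵀ invertible, and ∑ᵢ m*ᵢ rᵢ = 0. Define G⁺_M ∈ ℝ^{6n×6} with i-th block rows [(m*ᵢ/m*_o) I₃, m*ᵢ S(rᵢ)ᵀ (J*_o)⁻¹] and [0₃, J*ᵢ (J*_o)⁻¹]. Then G G⁺_M = I₆, i.e., G⁺_M is a right inverse of the grasp matrix G. -/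
import Mathlib

open Matrix

/-- Skew-symmetric cross-product matrix `S(r)` with `S(r) *ᵥ a = r ×₃ a`. -/
def skew (r : Fin 3 → ℝ) : Matrix (Fin 3) (Fin 3) ℝ :=
  !![0, -r 2, r 1; r 2, 0, -r 0; -r 1, r 0, 0]

/-- Rigid-contact grasp matrix `G = [I₃ 0₃ … I₃ 0₃ ; S(r₁) I₃ … S(rₙ) I₃]`. -/
def graspG (n : ℕ) (r : Fin n → Fin 3 → ℝ) :
    Matrix (Fin 3 ⊕ Fin 3) (Fin n × (Fin 3 ⊕ Fin 3)) ℝ :=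
  Matrix.of fun i kj =>
    match i, kj.2 with
    | Sum.inl a, Sum.inl b => (1 : Matrix (Fin 3) (Fin 3) ℝ) a b
    | Sum.inl _, Sum.inr _ => 0
    | Sum.inr a, Sum.inl b => skew (r kj.1) a b
    | Sum.inr a, Sum.inr b => (1 : Matrix (Fin 3) (Fin 3) ℝ) a b

lemma skew_smul' (c : ℝ) (v : Fin 3 → ℝ) : skew (c • v) = c • skew v := by
  ext i j
  fin_cases i <;> fin_cases j <;> simp [skew]

lemma skew_add' (u v : Fin 3 → ℝ) : skew (u + v) = skew u + skew v := by
  ext i j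
  fin_cases i <;> fin_cases j <;> simp [skew] <;> ring

lemma skew_zero' : skew (0 : Fin 3 → ℝ) = 0 := by
  simpa using skew_smul' 0 0

theorem corrected_parametrized_pseudoinverse_is_right_inverse
    (n : ℕ) (r : Fin n → Fin 3 → ℝ)
    (m : Fin n → ℝ) (hm : ∀ i, 0 < m i)
    (J : Fin n → Matrix (Fin 3) (Fin 3) ℝ)
    (hJsymm : ∀ i, (J i).IsSymm) (hJpsd : ∀ i, (J i).PosSemidef)
    (mo : ℝ) (hmo : mo = ∑ i, m i)
    (Jo : Matrix (Fin 3) (Fin 3) ℝ)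
    (hJo : Jo = (∑ i, J i) + ∑ i, skew (r i) * (m i • (skew (r i))ᵀ))
    (hJoinv : IsUnit Jo.det)
    (hcom : (∑ i, m i • r i) = 0)
    (GM : Matrix (Fin n × (Fin 3 ⊕ Fin 3)) (Fin 3 ⊕ Fin 3) ℝ)
    (hGM : GM = Matrix.of fun (kj : Fin n × (Fin 3 ⊕ Fin 3)) (b : Fin 3 ⊕ Fin 3) =>
      match kj.2, b with
      | Sum.inl a, Sum.inl b => ((m kj.1 / mo) • (1 : Matrix (Fin 3) (Fin 3) ℝ)) a b
      | Sum.inl a, Sum.inr b => (m kj.1 • ((skew (r kj.1))ᵀ * Jo⁻¹)) a b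
      | Sum.inr _, Sum.inl _ => 0
      | Sum.inr a, Sum.inr b => (J kj.1 * Jo⁻¹) a b) :
    graspG n r * GM = 1 := by
  have hne : Nonempty (Fin n) := by
    rcases Nat.eq_zero_or_pos n with h | h
    · subst h
      rw [show Jo = 0 by simp [hJo]] at hJoinv
      simp [Matrix.det_zero] at hJoinv
    · exact ⟨⟨0, h⟩⟩
  have hmo0 : mo ≠ 0 := by
    rw [hmo]
    exact ne_of_gt (Finset.sum_pos (fun i _ => hm i) Finset.univ_nonempty)
  have hJoJ : Jo * Jo⁻¹ = 1 := Matrix.mul_nonsing_inv _ hJoinv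
  have hskew : (∑ k, m k • skew (r k)) = 0 := by
    have h1 : (∑ k, m k • skew (r k)) = ∑ k, skew (m k • r k) := by
      simp [skew_smul']
    have h2 : (∑ k, skew (m k • r k))
        = (AddMonoidHom.mk' skew skew_add') (∑ k, m k • r k) :=
      (map_sum (AddMonoidHom.mk' skew skew_add') _ _).symm
    rw [h1, h2, hcom]
    simpa using skew_zero'
  have hskew' : ∀ a b, (∑ k, m k * skew (r k) a b) = 0 := by
    intro a b
    have := congrFun (congrFun hskew a) b
    simpa [Matrix.sum_apply] using this
  subst hGM
  ext i j
  rw [Matrix.mul_apply, Fintype.sum_prod_type]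
  simp only [Fintype.sum_sum_type]
  rcases i with a | a <;> rcases j with b | b
  · -- (inl, inl)
    simp only [graspG, Matrix.of_apply, Matrix.one_apply, Matrix.smul_apply, smul_eq_mul]
    by_cases hab : a = b <;>
      simp [hab, Finset.sum_ite_eq', div_eq_mul_inv, ← Finset.sum_mul, ← hmo,
        mul_inv_cancel₀ hmo0]
  · -- (inl, inr)
    simp only [graspG, Matrix.of_apply, Matrix.one_apply, Matrix.smul_apply, smul_eq_mul]
    have key : (∑ k, m k * ((skew (r k))ᵀ * Jo⁻¹) a b) = 0 := by
      have h0 : (∑ k, m k • ((skew (r k))ᵀ * Jo⁻¹)) = 0 := by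
        calc (∑ k, m k • ((skew (r k))ᵀ * Jo⁻¹))
            = (∑ k, m k • (skew (r k))ᵀ) * Jo⁻¹ := by
              rw [Finset.sum_mul]; simp [smul_mul_assoc]
          _ = (∑ k, m k • skew (r k))ᵀ * Jo⁻¹ := by
              simp [Matrix.transpose_sum, Matrix.transpose_smul]
          _ = 0 := by rw [hskew]; simp
      have := congrFun (congrFun h0 a) b
      simpa [Matrix.sum_apply] using this
    simpa [Finset.mul_sum, Finset.sum_ite_eq] using key
  · -- (inr, inl)
    simp only [graspG, Matrix.of_apply, Matrix.one_apply, Matrix.smul_apply, smul_eq_mul]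
    have key : (∑ k, skew (r k) a b * (m k / mo)) = 0 := by
      have h0 : (∑ k, skew (r k) a b * (m k / mo)) = (∑ k, m k * skew (r k) a b) / mo := by
        rw [Finset.sum_div]
        exact Finset.sum_congr rfl fun k _ => by ring
      rw [h0, hskew' a b, zero_div]
    simpa [Finset.mul_sum, Finset.sum_ite_eq] using key
  · -- (inr, inr)
    simp only [graspG, Matrix.of_apply, Matrix.one_apply, Matrix.smul_apply, smul_eq_mul,
      ite_mul, one_mul, zero_mul, Finset.sum_ite_eq, Finset.mem_univ, if_true]
    have expand : ∀ k : Fin n,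
        (∑ c, skew (r k) a c * (m k * ((skew (r k))ᵀ * Jo⁻¹) c b))
          = (skew (r k) * (m k • (skew (r k))ᵀ) * Jo⁻¹) a b := by
      intro k
      simp only [Matrix.mul_apply, Matrix.smul_apply, smul_eq_mul, Finset.mul_sum,
        Finset.sum_mul]
      rw [Finset.sum_comm]
      exact Finset.sum_congr rfl fun c _ => Finset.sum_congr rfl fun d _ => by ring
    calc ∑ k, (∑ c, skew (r k) a c * (m k * ((skew (r k))ᵀ * Jo⁻¹) c b) + (J k * Jo⁻¹) a b)
        = ∑ k, ((skew (r k) * (m k • (skew (r k))ᵀ) * Jo⁻¹) a b + (J k * Jo⁻¹) a b) :=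
          Finset.sum_congr rfl fun k _ => by rw [expand k]
      _ = ((∑ k, skew (r k) * (m k • (skew (r k))ᵀ)) * Jo⁻¹ + (∑ k, J k) * Jo⁻¹) a b := by
          simp [Matrix.add_apply, Finset.sum_mul, Matrix.sum_apply, Finset.sum_add_distrib]
      _ = (Jo * Jo⁻¹) a b := by rw [← add_mul, add_comm, ← hJo]
      _ = (1 : Matrix (Fin 3) (Fin 3) ℝ) a b := by rw [hJoJ]
      _ = if Sum.inr a = Sum.inr b then 1 else 0 := by simp [Matrix.one_apply]
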